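/- Let A, C ∈ ℝ^{n×n} with A invertible and C symmetric positive definite. For every η ∈ ℝ, all eigenvalues of M(η) = [[-C + ηA, -A], [Aᵀ + η²A - ηC, -ηA]] have strictly negative real part. -/

import Mathlib

/-!
The shear `(x, y) ↦ (x, y - η x)` conjugates `M(η)` to the saddle-point matrix
`M(0) = [[-C, -A], [Aᴴ, 0]]`, so it suffices to treat `η = 0`. For an eigenvector `v = (x, z)`
of `M(0)` the off-diagonal part is skew-Hermitian, so `Re (vᴴ M(0) v) = -Re (xᴴ C x)`, and
`x ≠ 0` because `A` is invertible. Hence `Re μ · ‖v‖² = -xᴴ C x < 0`.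
-/

open Matrix

open scoped ComplexOrder

namespace Matrix

variable {ι 𝕜 : Type*} [Fintype ι] [RCLike 𝕜]

theorem re_star_dotProduct_map_ofReal_mulVec (C : Matrix ι ι ℝ) (x : ι → ℂ) :
    (star x ⬝ᵥ C.map Complex.ofReal *ᵥ x).re =
      (fun i ↦ (x i).re) ⬝ᵥ C *ᵥ (fun i ↦ (x i).re) +
        (fun i ↦ (x i).im) ⬝ᵥ C *ᵥ (fun i ↦ (x i).im) := by
  simp only [dotProduct, mulVec, map_apply, Pi.star_apply, Finset.mul_sum, Complex.re_sum,
    ← Finset.sum_add_distrib]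
  refine Finset.sum_congr rfl fun i _ ↦ Finset.sum_congr rfl fun j _ ↦ ?_
  simp only [Complex.mul_re, Complex.mul_im, Complex.ofReal_re, Complex.ofReal_im,
    Complex.star_def, Complex.conj_re, Complex.conj_im]
  ring

theorem PosDef.map_ofReal {C : Matrix ι ι ℝ} (hC : C.PosDef) :
    (C.map Complex.ofReal).PosDef := by
  have hherm : (C.map Complex.ofReal).IsHermitian :=
    hC.isHermitian.map _ fun r ↦ (Complex.conj_ofReal r).symm
  refine .of_dotProduct_mulVec_pos hherm fun x hx ↦ Complex.lt_def.mpr ⟨?_, ?_⟩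
  · have hparts : (fun i ↦ (x i).re) ≠ 0 ∨ (fun i ↦ (x i).im) ≠ 0 := by
      contrapose! hx
      exact funext fun i ↦ Complex.ext (congrFun hx.1 i) (congrFun hx.2 i)
    rw [re_star_dotProduct_map_ofReal_mulVec, Complex.zero_re]
    rcases hparts with h | h
    · exact add_pos_of_pos_of_nonneg (hC.dotProduct_mulVec_pos h)
        (hC.posSemidef.dotProduct_mulVec_nonneg _)
    · exact add_pos_of_nonneg_of_pos (hC.posSemidef.dotProduct_mulVec_nonneg _)
        (hC.dotProduct_mulVec_pos h)
  · exact (hherm.im_star_dotProduct_mulVec_self x).symm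

theorem re_lt_zero_of_mulVec_eq_smul {M : Matrix ι ι 𝕜} {v : ι → 𝕜} {μ : 𝕜} (hv : v ≠ 0)
    (hMv : M *ᵥ v = μ • v) (hM : RCLike.re (star v ⬝ᵥ M *ᵥ v) < 0) : RCLike.re μ < 0 := by
  obtain ⟨hre, him⟩ := RCLike.pos_iff.mp (dotProduct_star_self_pos_iff.mpr hv)
  rw [hMv, dotProduct_smul, smul_eq_mul, RCLike.mul_re, him, mul_zero, sub_zero] at hM
  exact neg_of_mul_neg_left hM hre.le

theorem re_star_dotProduct_fromBlocks_mulVec (A C : Matrix ι ι 𝕜) (x z : ι → 𝕜) :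
    RCLike.re (star (Sum.elim x z) ⬝ᵥ fromBlocks (-C) (-A) Aᴴ 0 *ᵥ Sum.elim x z) =
      -RCLike.re (star x ⬝ᵥ C *ᵥ x) := by
  have hskew : star z ⬝ᵥ Aᴴ *ᵥ x = star (star x ⬝ᵥ A *ᵥ z) := by
    rw [star_dotProduct x, star_star, star_mulVec, ← dotProduct_mulVec]
  simp [fromBlocks_mulVec, neg_mulVec, Function.star_sumElim, hskew, dotProduct_neg]

theorem re_lt_zero_of_fromBlocks_mulVec_eq_smul [DecidableEq ι] {A C : Matrix ι ι 𝕜}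
    (hA : IsUnit A) (hC : C.PosDef) {v : ι ⊕ ι → 𝕜} {μ : 𝕜} (hv : v ≠ 0)
    (hMv : fromBlocks (-C) (-A) Aᴴ 0 *ᵥ v = μ • v) : RCLike.re μ < 0 := by
  obtain ⟨x, z, rfl⟩ : ∃ x z, v = Sum.elim x z := ⟨_, _, (Sum.elim_comp_inl_inr v).symm⟩
  have hx : x ≠ 0 := by
    rintro rfl
    have hAz : A *ᵥ z = 0 := funext fun i ↦ by
      simpa [fromBlocks_mulVec, neg_mulVec] using congrFun hMv (Sum.inl i)
    have hz : z = 0 := mulVec_injective_iff_isUnit.mpr hA (by simpa using hAz)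
    simp [hz] at hv
  refine re_lt_zero_of_mulVec_eq_smul hv hMv ?_
  rw [re_star_dotProduct_fromBlocks_mulVec, neg_lt_zero]
  exact (RCLike.pos_iff.mp (hC.dotProduct_mulVec_pos hx)).1

theorem shear_mul_fromBlocks_eq_fromBlocks_mul_shear [DecidableEq ι] {R : Type*} [CommRing R]
    (A B C : Matrix ι ι R) (η : R) :
    fromBlocks 1 0 (-η • 1) 1 *
        fromBlocks (-C + η • A) (-A) (B + η ^ 2 • A - η • C) (-(η • A)) =
      fromBlocks (-C) (-A) B 0 * fromBlocks 1 0 (-η • 1) 1 := by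
  simp only [fromBlocks_multiply]
  congr 1 <;> simp [smul_add, smul_smul]
  module

theorem mulVec_mulVec_eq_smul_of_mul_eq_mul {R : Type*} [CommRing R] {M N P : Matrix ι ι R}
    (h : P * M = N * P) {v : ι → R} {μ : R} (hMv : M *ᵥ v = μ • v) :
    N *ᵥ (P *ᵥ v) = μ • (P *ᵥ v) := by
  rw [mulVec_mulVec, ← h, ← mulVec_mulVec, hMv, mulVec_smul]

end Matrix

theorem stmt17 {n : ℕ} (A C : Matrix (Fin n) (Fin n) ℝ) (hA : IsUnit A) (hC : C.PosDef)
    (M : ℝ → Matrix (Fin n ⊕ Fin n) (Fin n ⊕ Fin n) ℝ)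
    (hM : ∀ η : ℝ,
      M η = Matrix.fromBlocks (-C + η • A) (-A) (Aᵀ + η ^ 2 • A - η • C) (-(η • A))) :
    ∀ η : ℝ, ∀ μ : ℂ,
      Module.End.HasEigenvalue (Matrix.toLin' ((M η).map (Complex.ofReal : ℝ → ℂ))) μ →
        μ.re < 0 := by
  intro η μ hμ
  obtain ⟨v, hv⟩ := hμ.exists_hasEigenvector
  set Ac := A.map Complex.ofReal
  set Cc := C.map Complex.ofReal
  have hMc : (M η).map Complex.ofReal = fromBlocks (-Cc + (η : ℂ) • Ac) (-Ac)
      (Acᴴ + (η : ℂ) ^ 2 • Ac - (η : ℂ) • Cc) (-((η : ℂ) • Ac)) := by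
    rw [hM, fromBlocks_map]
    congr 1 <;> ext <;> simp [Ac, Cc]
  have hMv : (M η).map Complex.ofReal *ᵥ v = μ • v := by
    simpa [toLin'_apply] using hv.apply_eq_smul
  rw [hMc] at hMv
  set P : Matrix (Fin n ⊕ Fin n) (Fin n ⊕ Fin n) ℂ := fromBlocks 1 0 (-(η : ℂ) • 1) 1
  have hP : IsUnit P := by simp [isUnit_iff_isUnit_det, P]
  have hPv : P *ᵥ v ≠ 0 := fun h ↦
    hv.2 (mulVec_injective_iff_isUnit.mpr hP (h.trans (mulVec_zero P).symm))
  exact re_lt_zero_of_fromBlocks_mulVec_eq_smul (hA.map Complex.ofRealHom.mapMatrix)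
    hC.map_ofReal hPv
    (mulVec_mulVec_eq_smul_of_mul_eq_mul (shear_mul_fromBlocks_eq_fromBlocks_mul_shear ..) hMv)
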